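/- Let n ≥ 8 and let Z be a totally positive real 4×n matrix (all ordered maximal 4×4 minors positive). Then Δ := B² − 4AC > 0, where A := Y_{88}, B := Y_{78} + Y_{87}, C := Y_{77}, and Y_{ij} := ⟨12i*43*56j⟩ are the chain polynomials defined from the columns of Z. -/

import Mathlib

noncomputable section

/-- `⟨u₁ u₂ u₃ u₄⟩`: the determinant of the `4 × 4` real matrix with columns `u₁,u₂,u₃,u₄`. -/
def det4 (a b c d : Fin 4 → ℝ) : ℝ :=
  Matrix.det (Matrix.of fun i j => ![a, b, c, d] j i)

/-- The `i`-th column of a `4 × n` matrix. -/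
def col {n : ℕ} (Z : Matrix (Fin 4) (Fin n) ℝ) (i : Fin n) : Fin 4 → ℝ :=
  fun r => Z r i

/-- `Z` is totally positive: all ordered maximal `4 × 4` minors are positive. -/
def TotPos {n : ℕ} (Z : Matrix (Fin 4) (Fin n) ℝ) : Prop :=
  ∀ i1 i2 i3 i4 : Fin n, i1 < i2 → i2 < i3 → i3 < i4 →
    0 < det4 (col Z i1) (col Z i2) (col Z i3) (col Z i4)

/-- The chain polynomial `⟨X * Y * U⟩` for blocks `X = (x₁,x₂,x₃)`, `Y = (y₁,y₂)`,
`U = (u₁,u₂,u₃)` of sizes `(3,2,3)`: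
`Σ_{w ∈ S₂¹} sign(w)·det[x₁ x₂ x₃ y_{w(2)}]·det[y_{w(1)} u₁ u₂ u₃]`. -/
def chain323 (x1 x2 x3 y1 y2 u1 u2 u3 : Fin 4 → ℝ) : ℝ :=
  det4 x1 x2 x3 y2 * det4 y1 u1 u2 u3 - det4 x1 x2 x3 y1 * det4 y2 u1 u2 u3

/-- `Y_{ij} := ⟨12i * 43 * 56j⟩`, as a function of the eight vectors
`z₁, z₂, z₃, z₄, z₅, z₆, z_i, z_j`. -/
def Ymat (z1 z2 z3 z4 z5 z6 zi zj : Fin 4 → ℝ) : ℝ :=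
  chain323 z1 z2 zi z4 z3 z5 z6 zj

/-- `A := Y₈₈`. -/
def Aco (z1 z2 z3 z4 z5 z6 z7 z8 : Fin 4 → ℝ) : ℝ :=
  Ymat z1 z2 z3 z4 z5 z6 z8 z8

/-- `B := Y₇₈ + Y₈₇`. -/
def Bco (z1 z2 z3 z4 z5 z6 z7 z8 : Fin 4 → ℝ) : ℝ :=
  Ymat z1 z2 z3 z4 z5 z6 z7 z8 + Ymat z1 z2 z3 z4 z5 z6 z8 z7

/-- `C := Y₇₇`. -/
def Cco (z1 z2 z3 z4 z5 z6 z7 z8 : Fin 4 → ℝ) : ℝ :=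
  Ymat z1 z2 z3 z4 z5 z6 z7 z7

/-- `Δ := B² − 4AC`. -/
def Dco (z1 z2 z3 z4 z5 z6 z7 z8 : Fin 4 → ℝ) : ℝ :=
  Bco z1 z2 z3 z4 z5 z6 z7 z8 ^ 2
    - 4 * Aco z1 z2 z3 z4 z5 z6 z7 z8 * Cco z1 z2 z3 z4 z5 z6 z7 z8

/-!
Put `v := ⟨1258⟩ z₇ − ⟨1257⟩ z₈`, the point where the line `z₇z₈` meets the hyperplane
`z₁z₂z₅`. Since `Y_{ij}` is bilinear in `(z_i, z_j)`, `Y_{vv}` is the binary quadratic form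
`C s² + B s t + A t²` at `(s, t) = (⟨1258⟩, −⟨1257⟩)`. A Grassmann–Plücker relation turns
`Y_{vv}` into `⟨12v6⟩⟨345v⟩ − ⟨12v5⟩⟨346v⟩`, where `⟨12v5⟩ = 0` and `⟨12v6⟩ = ⟨1256⟩⟨1278⟩`;
so the form takes the value `−⟨1256⟩⟨1278⟩⟨125*78*345⟩`, where
`⟨125*78*345⟩ = ⟨1257⟩⟨3458⟩ − ⟨1258⟩⟨3457⟩`. Three-term Plücker relations show that `C` and
`⟨125*78*345⟩` are positive when `Z` is totally positive, and a binary quadratic form with a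
positive coefficient that takes a negative value has positive discriminant.
-/

theorem discrim_pos_of_lt_zero {R : Type*} [CommRing R] [LinearOrder R] [IsStrictOrderedRing R]
    {a b c s t : R} (hc : 0 < c)
    (h : c * s ^ 2 + b * s * t + a * t ^ 2 < 0) : 0 < discrim a b c := by
  have key : discrim a b c * t ^ 2
      = (2 * c * s + b * t) ^ 2 - 4 * c * (c * s ^ 2 + b * s * t + a * t ^ 2) := by
    rw [discrim]; ring
  have hpos : 0 < discrim a b c * t ^ 2 := by
    rw [key]; nlinarith [sq_nonneg (2 * c * s + b * t), mul_pos hc (neg_pos.mpr h)]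
  exact pos_of_mul_pos_left hpos (sq_nonneg t)

theorem det4_eq (a b c d : Fin 4 → ℝ) :
    det4 a b c d =
      a 0 * (b 1 * (c 2 * d 3 - c 3 * d 2) - b 2 * (c 1 * d 3 - c 3 * d 1)
        + b 3 * (c 1 * d 2 - c 2 * d 1))
      - a 1 * (b 0 * (c 2 * d 3 - c 3 * d 2) - b 2 * (c 0 * d 3 - c 3 * d 0)
        + b 3 * (c 0 * d 2 - c 2 * d 0))
      + a 2 * (b 0 * (c 1 * d 3 - c 3 * d 1) - b 1 * (c 0 * d 3 - c 3 * d 0)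
        + b 3 * (c 0 * d 1 - c 1 * d 0))
      - a 3 * (b 0 * (c 1 * d 2 - c 2 * d 1) - b 1 * (c 0 * d 2 - c 2 * d 0)
        + b 2 * (c 0 * d 1 - c 1 * d 0)) := by
  simp [det4, Matrix.det_succ_row_zero, Fin.sum_univ_succ, Fin.succAbove]
  ring

section ChainPolynomials

variable (z1 z2 z3 z4 z5 z6 z7 z8 : Fin 4 → ℝ)

theorem Ymat_smul_add_smul (s t : ℝ) :
    Ymat z1 z2 z3 z4 z5 z6 (s • z7 + t • z8) (s • z7 + t • z8)
      = Cco z1 z2 z3 z4 z5 z6 z7 z8 * s ^ 2 + Bco z1 z2 z3 z4 z5 z6 z7 z8 * s * t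
        + Aco z1 z2 z3 z4 z5 z6 z7 z8 * t ^ 2 := by
  simp only [Ymat, chain323, Aco, Bco, Cco, det4_eq, Pi.add_apply, Pi.smul_apply, smul_eq_mul]
  ring

theorem Ymat_self_eq (v : Fin 4 → ℝ) :
    Ymat z1 z2 z3 z4 z5 z6 v v
      = det4 z1 z2 v z6 * det4 z3 z4 z5 v - det4 z1 z2 v z5 * det4 z3 z4 z6 v := by
  simp only [Ymat, chain323, det4_eq]
  ring

theorem quadForm_eq_neg_mul_chain323 :
    Cco z1 z2 z3 z4 z5 z6 z7 z8 * det4 z1 z2 z5 z8 ^ 2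
        + Bco z1 z2 z3 z4 z5 z6 z7 z8 * det4 z1 z2 z5 z8 * (-det4 z1 z2 z5 z7)
        + Aco z1 z2 z3 z4 z5 z6 z7 z8 * (-det4 z1 z2 z5 z7) ^ 2
      = -(det4 z1 z2 z5 z6 * det4 z1 z2 z7 z8 * chain323 z1 z2 z5 z7 z8 z3 z4 z5) := by
  set v := det4 z1 z2 z5 z8 • z7 + (-det4 z1 z2 z5 z7) • z8
  have h5 : det4 z1 z2 v z5 = 0 := by
    simp only [v, det4_eq, Pi.add_apply, Pi.smul_apply, smul_eq_mul]; ring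
  have h6 : det4 z1 z2 v z6 = det4 z1 z2 z5 z6 * det4 z1 z2 z7 z8 := by
    simp only [v, det4_eq, Pi.add_apply, Pi.smul_apply, smul_eq_mul]; ring
  have h345 : det4 z3 z4 z5 v = -chain323 z1 z2 z5 z7 z8 z3 z4 z5 := by
    simp only [v, chain323, det4_eq, Pi.add_apply, Pi.smul_apply, smul_eq_mul]; ring
  rw [← Ymat_smul_add_smul, Ymat_self_eq, h5, h6, h345]
  ring

theorem Cco_mul_det4_eq :
    Cco z1 z2 z3 z4 z5 z6 z7 z8 * det4 z1 z3 z5 z7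
      = det4 z1 z2 z5 z7 * det4 z1 z3 z4 z7 * det4 z3 z5 z6 z7
        + det4 z1 z2 z3 z7 * det4 z1 z5 z6 z7 * det4 z3 z4 z5 z7 := by
  have plucker₁ : det4 z1 z2 z4 z7 * det4 z1 z3 z5 z7
      = det4 z1 z2 z3 z7 * det4 z1 z4 z5 z7 + det4 z1 z2 z5 z7 * det4 z1 z3 z4 z7 := by
    simp only [det4_eq]; ring
  have plucker₂ : det4 z1 z4 z5 z7 * det4 z3 z5 z6 z7
      = det4 z1 z3 z5 z7 * det4 z4 z5 z6 z7 + det4 z1 z5 z6 z7 * det4 z3 z4 z5 z7 := by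
    simp only [det4_eq]; ring
  have swap₃ : det4 z1 z2 z7 z3 = -det4 z1 z2 z3 z7 := by simp only [det4_eq]; ring
  have swap₄ : det4 z1 z2 z7 z4 = -det4 z1 z2 z4 z7 := by simp only [det4_eq]; ring
  rw [Cco, Ymat, chain323, swap₃, swap₄]
  linear_combination det4 z3 z5 z6 z7 * plucker₁ + det4 z1 z2 z3 z7 * plucker₂

theorem chain323_mul_det4_eq :
    chain323 z1 z2 z5 z7 z8 z3 z4 z5 * det4 z1 z3 z5 z7
      = det4 z1 z2 z5 z7 * det4 z1 z3 z4 z5 * det4 z3 z5 z7 z8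
        + det4 z1 z2 z3 z5 * det4 z1 z5 z7 z8 * det4 z3 z4 z5 z7 := by
  have plucker₁ : det4 z1 z3 z5 z7 * det4 z3 z4 z5 z8
      = det4 z1 z3 z4 z5 * det4 z3 z5 z7 z8 + det4 z1 z3 z5 z8 * det4 z3 z4 z5 z7 := by
    simp only [det4_eq]; ring
  have plucker₂ : det4 z1 z2 z5 z7 * det4 z1 z3 z5 z8
      = det4 z1 z2 z5 z8 * det4 z1 z3 z5 z7 + det4 z1 z2 z3 z5 * det4 z1 z5 z7 z8 := by
    simp only [det4_eq]; ring
  have swap₇ : det4 z7 z3 z4 z5 = -det4 z3 z4 z5 z7 := by simp only [det4_eq]; ring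
  have swap₈ : det4 z8 z3 z4 z5 = -det4 z3 z4 z5 z8 := by simp only [det4_eq]; ring
  rw [chain323, swap₇, swap₈]
  linear_combination det4 z1 z2 z5 z7 * plucker₁ + det4 z3 z4 z5 z7 * plucker₂

theorem Cco_pos (h1357 : 0 < det4 z1 z3 z5 z7) (h1257 : 0 < det4 z1 z2 z5 z7)
    (h1347 : 0 < det4 z1 z3 z4 z7) (h3567 : 0 < det4 z3 z5 z6 z7)
    (h1237 : 0 < det4 z1 z2 z3 z7) (h1567 : 0 < det4 z1 z5 z6 z7)
    (h3457 : 0 < det4 z3 z4 z5 z7) : 0 < Cco z1 z2 z3 z4 z5 z6 z7 z8 := by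
  refine pos_of_mul_pos_left ?_ h1357.le
  rw [Cco_mul_det4_eq]
  exact add_pos (mul_pos (mul_pos h1257 h1347) h3567) (mul_pos (mul_pos h1237 h1567) h3457)

theorem chain323_pos (h1357 : 0 < det4 z1 z3 z5 z7) (h1257 : 0 < det4 z1 z2 z5 z7)
    (h1345 : 0 < det4 z1 z3 z4 z5) (h3578 : 0 < det4 z3 z5 z7 z8)
    (h1235 : 0 < det4 z1 z2 z3 z5) (h1578 : 0 < det4 z1 z5 z7 z8)
    (h3457 : 0 < det4 z3 z4 z5 z7) :
    0 < chain323 z1 z2 z5 z7 z8 z3 z4 z5 := by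
  refine pos_of_mul_pos_left ?_ h1357.le
  rw [chain323_mul_det4_eq]
  exact add_pos (mul_pos (mul_pos h1257 h1345) h3578) (mul_pos (mul_pos h1235 h1578) h3457)

end ChainPolynomials

theorem TotPos.submatrix {m n : ℕ} {Z : Matrix (Fin 4) (Fin n) ℝ} (hZ : TotPos Z)
    {f : Fin m → Fin n} (hf : StrictMono f) : TotPos (Z.submatrix id f) :=
  fun _ _ _ _ h₁₂ h₂₃ h₃₄ => hZ _ _ _ _ (hf h₁₂) (hf h₂₃) (hf h₃₄)

theorem Dco_pos_of_totPos (W : Matrix (Fin 4) (Fin 8) ℝ) (hW : TotPos W) :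
    0 < Dco (col W 0) (col W 1) (col W 2) (col W 3) (col W 4) (col W 5) (col W 6) (col W 7) := by
  set z := col W
  have minor : ∀ i j k l : Fin 8, i < j ∧ j < k ∧ k < l → 0 < det4 (z i) (z j) (z k) (z l) :=
    fun i j k l h => hW i j k l h.1 h.2.1 h.2.2
  have hC := Cco_pos (z 0) (z 1) (z 2) (z 3) (z 4) (z 5) (z 6) (z 7)
    (minor 0 2 4 6 (by decide)) (minor 0 1 4 6 (by decide)) (minor 0 2 3 6 (by decide))
    (minor 2 4 5 6 (by decide)) (minor 0 1 2 6 (by decide)) (minor 0 4 5 6 (by decide))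
    (minor 2 3 4 6 (by decide))
  have hchain := chain323_pos (z 0) (z 1) (z 2) (z 3) (z 4) (z 6) (z 7)
    (minor 0 2 4 6 (by decide)) (minor 0 1 4 6 (by decide)) (minor 0 2 3 4 (by decide))
    (minor 2 4 6 7 (by decide)) (minor 0 1 2 4 (by decide)) (minor 0 4 6 7 (by decide))
    (minor 2 3 4 6 (by decide))
  rw [Dco, ← discrim]
  refine discrim_pos_of_lt_zero hC (s := det4 (z 0) (z 1) (z 4) (z 7))
    (t := -det4 (z 0) (z 1) (z 4) (z 6)) ?_
  rw [quadForm_eq_neg_mul_chain323]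
  exact neg_neg_of_pos
    (mul_pos (mul_pos (minor 0 1 4 5 (by decide)) (minor 0 1 6 7 (by decide))) hchain)

/-- Let `n ≥ 8` and let `Z` be a totally positive real `4 × n` matrix.
Then `Δ := B² − 4AC > 0`, where `A := Y₈₈`, `B := Y₇₈ + Y₈₇`, `C := Y₇₇`, and
`Y_{ij} := ⟨12i * 43 * 56j⟩` are the chain polynomials defined from the columns of `Z`
(1-indexed: `z_k` is the column `⟨k − 1, _⟩` of `Z`). -/
theorem four_mass_box_discriminant_pos (n : ℕ) (hn : 8 ≤ n)
    (Z : Matrix (Fin 4) (Fin n) ℝ) (hZ : TotPos Z) :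
    0 < Dco (col Z ⟨0, by omega⟩) (col Z ⟨1, by omega⟩) (col Z ⟨2, by omega⟩)
      (col Z ⟨3, by omega⟩) (col Z ⟨4, by omega⟩) (col Z ⟨5, by omega⟩)
      (col Z ⟨6, by omega⟩) (col Z ⟨7, by omega⟩) := by
  convert Dco_pos_of_totPos _ (hZ.submatrix (Fin.strictMono_castLE hn)) using 2 <;> rfl

end
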